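/- arXiv:2203.12585 — 5 statements merged into one kernel-verified Lean document; each statement's English description precedes it below -/
import Mathlib

section
/- Let S ⊆ ω₁ ∩ Ω be a stationary set and η̄ = ⟨η_δ : δ ∈ S⟩ an S-ladder system such that ran(η_δ) ⊆ Ω for every δ ∈ S. If η̄ has ℵ₀-uniformization, then every S-ladder system η̄* very similar to η̄ also has ℵ₀-uniformization. -/
noncomputable section
open Classical Set Pointwise

/-- The first uncountable ordinal. -/
noncomputable def omega1 : Ordinal := (Cardinal.aleph 1).ord

/-- A club (closed unbounded) subset of ω₁. -/
def IsClubOmega1 (C : Set Ordinal) : Prop :=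
  C ⊆ Set.Iio omega1 ∧
  (∀ α < omega1, ∃ β ∈ C, α < β) ∧
  (∀ α < omega1, Order.IsSuccLimit α → (∀ β < α, ∃ γ ∈ C, β < γ ∧ γ < α) → α ∈ C)

/-- A stationary subset of ω₁. -/
def IsStationaryOmega1 (S : Set Ordinal) : Prop :=
  S ⊆ Set.Iio omega1 ∧ ∀ C, IsClubOmega1 C → (S ∩ C).Nonempty

/-- `η` is an `S`-ladder system: for each `δ ∈ S`, `η δ` is a strictly increasing
ω-sequence of ordinals below `δ` with supremum `δ`. -/
def IsLadderSystem (S : Set Ordinal) (η : Ordinal → ℕ → Ordinal) : Prop :=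
  ∀ δ ∈ S, StrictMono (η δ) ∧ (∀ n, η δ n < δ) ∧ ∀ β < δ, ∃ n, β < η δ n

/-- The ladder system `η` on `S` has ℵ₀-uniformization: every colouring
`⟨c_δ : δ ∈ S⟩` (where `c δ n` is the colour of `η δ n`) is uniformized by a single
function `f` on ω₁, up to a finite error on each ladder. -/
def HasUnif (S : Set Ordinal) (η : Ordinal → ℕ → Ordinal) : Prop :=
  ∀ c : Ordinal → ℕ → ℕ, ∃ f : Ordinal → ℕ, ∀ δ ∈ S, ∃ N : ℕ, ∀ n ≥ N, f (η δ n) = c δ n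

/-- Two `S`-ladder systems are very similar. -/
def VerySimilar (S : Set Ordinal) (η1 η2 : Ordinal → ℕ → Ordinal) : Prop :=
  ∀ δ ∈ S, ∃ k1 k2 : ℕ,
    {β : Ordinal | ∃ n, β = η1 δ (k1 + n) + Ordinal.omega0} =
    {β : Ordinal | ∃ n, β = η2 δ (k2 + n) + Ordinal.omega0}

/-!
Write every ordinal as `β = ω * (β / ω) + (β % ω)`: a block start plus a finite offset. Eventually
every rung of `ηs δ` has the form `η δ n + k` with `k : ℕ`, and since the rungs of `η` are limits,
`η δ n` is the block start of that rung. Only finitely many rungs of `ηs δ` fall into the block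
`[η δ n, η δ n + ω)`, so the colours of those rungs form a finitely supported function
`offset ↦ colour`, a colour from a countable set. Uniformizing these colours along `η` and reading
the value at the block start of `β` at the offset of `β` uniformizes the colouring along `ηs`.
-/

open Ordinal Function

namespace Ordinal

theorem add_omega0_le_of_isSuccLimit {a b : Ordinal} (ha : Order.IsSuccLimit a) (hb : b < a) :
    b + ω ≤ a :=
  (add_le_iff_of_isSuccLimit isSuccLimit_omega0).2 fun d hd => by
    obtain ⟨n, rfl⟩ := lt_omega0.1 hd
    exact (ha.add_natCast_lt hb n).le

theorem exists_eq_add_natCast_of_add_omega0_eq {a b : Ordinal} (ha : Order.IsSuccLimit a)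
    (h : b + ω = a + ω) : ∃ k : ℕ, b = a + k := by
  have hab : a ≤ b := by
    by_contra! hba
    exact (add_omega0_le_of_isSuccLimit ha hba).not_gt (h ▸ lt_add_of_pos_right a omega0_pos)
  have hba : b < a + ω := h ▸ lt_add_of_pos_right b omega0_pos
  obtain ⟨k, hk⟩ := lt_omega0.1 (sub_lt_of_lt_add hba omega0_pos)
  exact ⟨k, by rw [← hk, Ordinal.add_sub_cancel_of_le hab]⟩

theorem omega0_mul_div_omega0_add_natCast {a : Ordinal} (ha : ω ∣ a) (k : ℕ) :
    ω * ((a + k) / ω) = a := by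
  obtain ⟨a, rfl⟩ := ha
  rw [mul_add_div a omega0_ne_zero, div_eq_zero_of_lt (natCast_lt_omega0 k), add_zero]

theorem toNat_card_add_natCast_mod_omega0 {a : Ordinal} (ha : ω ∣ a) (k : ℕ) :
    Cardinal.toNat ((a + k) % ω).card = k := by
  obtain ⟨a, rfl⟩ := ha
  rw [mul_add_mod_self, mod_eq_of_lt (natCast_lt_omega0 k), card_nat, Cardinal.toNat_natCast]

end Ordinal

theorem HasUnif.exists_uniformizing {S : Set Ordinal} {η : Ordinal → ℕ → Ordinal}
    (h : HasUnif S η) {α : Type*} [Countable α] [Nonempty α] (c : Ordinal → ℕ → α) :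
    ∃ f : Ordinal → α, ∀ δ ∈ S, ∃ N : ℕ, ∀ n ≥ N, f (η δ n) = c δ n := by
  obtain ⟨s, hs⟩ := exists_surjective_nat α
  obtain ⟨f, hf⟩ := h fun δ n => surjInv hs (c δ n)
  refine ⟨s ∘ f, fun δ hδ => ?_⟩
  obtain ⟨N, hN⟩ := hf δ hδ
  exact ⟨N, fun n hn => by rw [comp_apply, hN n hn, surjInv_eq hs]⟩

section Ladder

variable {e : ℕ → Ordinal} {δ a : Ordinal} {γ : Type*} [Zero γ]

theorem finite_setOf_exists_eq_add_natCast (he : Monotone e)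
    (he_unbdd : ∀ β < δ, ∃ m, β < e m) (ha : a + ω < δ) :
    {k : ℕ | ∃ m, e m = a + k}.Finite := by
  obtain ⟨M, hM⟩ := he_unbdd _ ha
  refine ((Set.finite_lt_nat M).biUnion (t := fun m => {k : ℕ | e m = a + k})
    fun m _ => Set.Subsingleton.finite ?_).subset ?_
  · rintro k (hk : e m = a + k) l (hl : e m = a + l)
    exact_mod_cast add_left_cancel (hk.symm.trans hl)
  · rintro k ⟨m, hm⟩
    refine Set.mem_biUnion (x := m) (show m < M from ?_) hm
    by_contra! hMm
    exact (hm ▸ (add_lt_add_iff_left a).2 (natCast_lt_omega0 k)).not_ge (hM.trans_le (he hMm)).le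

theorem exists_forall_ge_exists_eq_add_natCast {e' : ℕ → Ordinal}
    (he_lim : ∀ n, Order.IsSuccLimit (e n)) (he : StrictMono e) (he_lt : ∀ n, e n < δ)
    (he' : Monotone e') (he'_unbdd : ∀ β < δ, ∃ m, β < e' m) {k₁ k₂ : ℕ}
    (hsim : {β | ∃ n, β = e (k₁ + n) + ω} = {β | ∃ n, β = e' (k₂ + n) + ω}) (N : ℕ) :
    ∃ M, ∀ m ≥ M, ∃ n ≥ N, ∃ k : ℕ, e' m = e n + k := by
  obtain ⟨M, hM⟩ := he'_unbdd _ (he_lt N)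
  refine ⟨max M k₂, fun m hm => ?_⟩
  have hmem : e' m + ω ∈ {β | ∃ n, β = e' (k₂ + n) + ω} :=
    ⟨m - k₂, by rw [Nat.add_sub_cancel' (le_of_max_le_right hm)]⟩
  rw [← hsim] at hmem
  obtain ⟨n, hn⟩ := hmem
  obtain ⟨k, hk⟩ := exists_eq_add_natCast_of_add_omega0_eq (he_lim _) hn
  refine ⟨k₁ + n, ?_, k, hk⟩
  by_contra! hlt
  have : e' m < e N := calc
    e' m < e (k₁ + n) + ω := hk ▸ (add_lt_add_iff_left _).2 (natCast_lt_omega0 k)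
    _ ≤ e N := add_omega0_le_of_isSuccLimit (he_lim N) (he hlt)
  exact this.not_ge (hM.le.trans (he' (le_of_max_le_left hm)))

def offsetColouring (e : ℕ → Ordinal) (c : ℕ → γ) (a : Ordinal) (k : ℕ) : γ :=
  if h : ∃ m, e m = a + k then c h.choose else 0

theorem offsetColouring_of_eq (he : Injective e) {c : ℕ → γ} {m k : ℕ} (h : e m = a + k) :
    offsetColouring e c a k = c m := by
  have hex : ∃ m, e m = a + k := ⟨m, h⟩
  rw [offsetColouring, dif_pos hex, he (hex.choose_spec.trans h.symm)]

theorem support_offsetColouring_subset (c : ℕ → γ) :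
    support (offsetColouring e c a) ⊆ {k : ℕ | ∃ m, e m = a + k} := by
  intro k hk
  by_contra h
  exact hk (dif_neg h)

end Ladder

def toFinsuppOrZero {α M : Type*} [Zero M] (g : α → M) : α →₀ M :=
  if h : (support g).Finite then Finsupp.ofSupportFinite g h else 0

theorem coe_toFinsuppOrZero {α M : Type*} [Zero M] {g : α → M} (h : (support g).Finite) :
    ⇑(toFinsuppOrZero g) = g := by
  rw [toFinsuppOrZero, dif_pos h, Finsupp.ofSupportFinite_coe]

theorem uniformization_of_verySimilar_general (S : Set Ordinal)
    (η : Ordinal → ℕ → Ordinal) (hη : IsLadderSystem S η)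
    (hran : ∀ δ ∈ S, ∀ n, Order.IsSuccLimit (η δ n))
    (hunif : HasUnif S η)
    (ηs : Ordinal → ℕ → Ordinal) (hηs : IsLadderSystem S ηs)
    (hsim : VerySimilar S η ηs) :
    HasUnif S ηs := by
  intro c
  obtain ⟨F, hF⟩ := hunif.exists_uniformizing fun δ n =>
    toFinsuppOrZero (offsetColouring (ηs δ) (c δ) (η δ n))
  refine ⟨fun β => F (ω * (β / ω)) (Cardinal.toNat (β % ω).card), fun δ hδ => ?_⟩
  obtain ⟨hη_mono, hη_lt, -⟩ := hη δ hδ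
  obtain ⟨hηs_mono, -, hηs_unbdd⟩ := hηs δ hδ
  obtain ⟨N, hN⟩ := hF δ hδ
  obtain ⟨k₁, k₂, hsimδ⟩ := hsim δ hδ
  obtain ⟨M, hM⟩ := exists_forall_ge_exists_eq_add_natCast (hran δ hδ) hη_mono hη_lt
    hηs_mono.monotone hηs_unbdd hsimδ N
  refine ⟨M, fun m hm => ?_⟩
  obtain ⟨n, hn, k, hk⟩ := hM m hm
  have hdvd : ω ∣ η δ n := isSuccPrelimit_iff_omega0_dvd.1 (hran δ hδ n).isSuccPrelimit
  have hblock : η δ n + ω < δ :=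
    (add_omega0_le_of_isSuccLimit (hran δ hδ (n + 1)) (hη_mono n.lt_succ_self)).trans_lt (hη_lt _)
  have hfin : (support (offsetColouring (ηs δ) (c δ) (η δ n))).Finite :=
    (finite_setOf_exists_eq_add_natCast hηs_mono.monotone hηs_unbdd hblock).subset
      (support_offsetColouring_subset _)
  simp only [hk, omega0_mul_div_omega0_add_natCast hdvd, toNat_card_add_natCast_mod_omega0 hdvd,
    hN n hn, coe_toFinsuppOrZero hfin, offsetColouring_of_eq hηs_mono.injective hk]

/-- Lemma: if an `S`-ladder system `η` running through limit ordinals has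
ℵ₀-uniformization, then so does every `S`-ladder system very similar to it. -/
theorem uniformization_of_verySimilar (S : Set Ordinal) (hS : IsStationaryOmega1 S)
    (hlim : ∀ δ ∈ S, Order.IsSuccLimit δ)
    (η : Ordinal → ℕ → Ordinal) (hη : IsLadderSystem S η)
    (hran : ∀ δ ∈ S, ∀ n, Order.IsSuccLimit (η δ n))
    (hunif : HasUnif S η)
    (ηs : Ordinal → ℕ → Ordinal) (hηs : IsLadderSystem S ηs)
    (hsim : VerySimilar S η ηs) :
    HasUnif S ηs :=
  uniformization_of_verySimilar_general S η hη hran hunif ηs hηs hsim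
end
end

section
/- Let H₀ ≤ H₁ be free abelian groups of finite rank such that H₀ is a pure subgroup of H₁, and suppose that {g₀, g₁, …, g_{n-1}} ⊆ H₁ is independent over H₀ and the pure closure of H₀ ∪ {g_i : i < n} in H₁ equals H₁. Then there exist elements g*_i (i < n) with g*_i belonging to the pure closure of H₀ ∪ {g_j : j ≤ i}, such that H₁ = H₀ ⊕ (⊕_{i<n} ℤg*_i). -/
noncomputable section
open Classical Set

universe u

/-- `H` is a pure subgroup of `G`. -/
def IsPureSubgroup {G : Type u} [AddCommGroup G] (H : AddSubgroup G) : Prop :=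
  ∀ (g : G) (n : ℤ), n ≠ 0 → n • g ∈ H → g ∈ H

/-- The pure closure of a subset `A` of an abelian group: all `x` such that `n • x`
lies in the subgroup generated by `A` for some `n > 0`. -/
def pureClosure {G : Type u} [AddCommGroup G] (A : Set G) : Set G :=
  {x | ∃ n : ℤ, 0 < n ∧ n • x ∈ AddSubgroup.closure A}

/-- A finite family `g` is independent over the subgroup `K`: no nontrivial
ℤ-linear combination of the `g i` lies in `K`. -/
def FinIndepOver {G : Type u} [AddCommGroup G] (K : AddSubgroup G) {n : ℕ}
    (g : Fin n → G) : Prop :=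
  ∀ c : Fin n → ℤ, (∑ i, c i • g i) ∈ K → ∀ i, c i = 0

/-!
Let `P k` be the pure closure of `H₀ ∪ {g j | j < k}`, so that `P 0 = H₀` by purity and
`P n = H₁` by hypothesis. The quotient `P (k + 1) / P k` lies in the finitely generated
torsion-free group `H₁ / P k`, and each of its elements has a nonzero multiple in the span of
the image of `g k`, which is nonzero by independence. So it has rank one, hence is infinite
cyclic. Lifting generators to `g* k`, every element of `H₁` is peeled off uniquely along the
flag as `h + ∑ c k • g* k` with `h ∈ H₀`.
-/

open Submodule

namespace Submodule

variable {R M : Type*} [CommRing R] [IsDomain R] [AddCommGroup M] [Module R M]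

def saturation (N : Submodule R M) : Submodule R M where
  carrier := {x | ∃ r ≠ (0 : R), r • x ∈ N}
  zero_mem' := ⟨1, one_ne_zero, by simp⟩
  add_mem' := by
    rintro x y ⟨r, hr, hx⟩ ⟨s, hs, hy⟩
    refine ⟨s * r, mul_ne_zero hs hr, ?_⟩
    rw [smul_add, mul_smul, mul_comm, mul_smul]
    exact add_mem (N.smul_mem s hx) (N.smul_mem r hy)
  smul_mem' := by
    rintro a x ⟨r, hr, hx⟩
    exact ⟨r, hr, by rw [smul_comm]; exact N.smul_mem a hx⟩

variable {N N' : Submodule R M} {x : M}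

theorem mem_saturation : x ∈ N.saturation ↔ ∃ r ≠ (0 : R), r • x ∈ N := Iff.rfl

theorem le_saturation (N : Submodule R M) : N ≤ N.saturation :=
  fun x hx => ⟨1, one_ne_zero, by rwa [one_smul]⟩

theorem saturation_mono (h : N ≤ N') : N.saturation ≤ N'.saturation :=
  fun _ ⟨r, hr, hx⟩ => ⟨r, hr, h hx⟩

theorem mem_saturation_of_smul_mem {r : R} (hr : r ≠ 0) (h : r • x ∈ N.saturation) :
    x ∈ N.saturation := by
  obtain ⟨s, hs, hx⟩ := h
  exact ⟨s * r, mul_ne_zero hs hr, by rwa [mul_smul]⟩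

instance isTorsionFree_quotient_saturation (N : Submodule R M) :
    Module.IsTorsionFree R (M ⧸ N.saturation) := by
  refine .of_smul_eq_zero fun r y hry => ?_
  obtain ⟨x, rfl⟩ := Quotient.mk_surjective _ y
  rw [← Quotient.mk_smul, Quotient.mk_eq_zero] at hry
  rw [Quotient.mk_eq_zero, or_iff_not_imp_left]
  exact fun hr => mem_saturation_of_smul_mem hr hry

variable [IsPrincipalIdealRing R] [Module.Finite R M]

theorem exists_le_span_singleton_of_le_saturation [Module.IsTorsionFree R M]
    {Q : Submodule R M} {q : M} (hq : q ∈ Q) (hQ : Q ≤ (R ∙ q).saturation) :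
    ∃ u ∈ Q, Q ≤ R ∙ u := by
  -- If `Q` had rank at least two, some element of `Q` would have no nonzero multiple in `R ∙ q`.
  refine (rank_submodule_le_one_iff Q).1 (not_lt.1 fun hrank => ?_)
  have hspan : Module.rank R (R ∙ (⟨q, hq⟩ : Q)) < Module.rank R Q :=
    (rank_span_le _).trans_lt (by simpa using hrank)
  obtain ⟨m, hm⟩ := exists_smul_notMem_of_rank_lt hspan
  obtain ⟨r, hr, hrm⟩ := hQ m.2
  obtain ⟨a, ha⟩ := mem_span_singleton.1 hrm
  exact hm r hr (mem_span_singleton.2 ⟨a, Subtype.ext ha⟩)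

theorem exists_generator_saturation_sup_span_singleton {q : M} (hq : q ∉ N.saturation) :
    ∃ w ∈ (N ⊔ R ∙ q).saturation,
      (∀ x ∈ (N ⊔ R ∙ q).saturation, ∃ c : R, x - c • w ∈ N.saturation) ∧
      ∀ c : R, c • w ∈ N.saturation → c = 0 := by
  -- The image of `(N ⊔ R ∙ q).saturation` in the torsion-free `M ⧸ N.saturation` is cyclic.
  set π := N.saturation.mkQ
  have hπ : ∀ {x}, π x = 0 ↔ x ∈ N.saturation := Quotient.mk_eq_zero _
  have hQ : (N ⊔ R ∙ q).saturation.map π ≤ (R ∙ π q).saturation := by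
    rintro _ ⟨x, ⟨r, hr, hx⟩, rfl⟩
    obtain ⟨y, hy, z, hz, hyz⟩ := mem_sup.1 hx
    obtain ⟨a, rfl⟩ := mem_span_singleton.1 hz
    refine ⟨r, hr, mem_span_singleton.2 ⟨a, ?_⟩⟩
    rw [← map_smul, ← map_smul, ← hyz, map_add, hπ.2 (N.le_saturation hy), zero_add]
  obtain ⟨_, ⟨w, hw, rfl⟩, hgen⟩ := exists_le_span_singleton_of_le_saturation
    (mem_map_of_mem (le_saturation _ (mem_sup_right (mem_span_singleton_self q)))) hQ
  have hspan : ∀ x ∈ (N ⊔ R ∙ q).saturation, ∃ c : R, x - c • w ∈ N.saturation := by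
    intro x hx
    obtain ⟨c, hc⟩ := mem_span_singleton.1 (hgen (mem_map_of_mem hx))
    exact ⟨c, hπ.1 (by rw [map_sub, map_smul, hc, sub_self])⟩
  refine ⟨w, hw, hspan, fun c hc => ?_⟩
  by_contra hc0
  obtain ⟨d, hd⟩ := hspan q (le_saturation _ (mem_sup_right (mem_span_singleton_self q)))
  have hdw : d • w ∈ N.saturation := smul_mem _ d (mem_saturation_of_smul_mem hc0 hc)
  exact hq (by simpa using add_mem hd hdw)

end Submodule

section Flag

variable {R M : Type*} [Ring R] [AddCommGroup M] [Module R M] {P : ℕ → Submodule R M}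

theorem exists_mem_add_sum_smul_of_flag {n : ℕ} {w : Fin n → M}
    (hspan : ∀ i : Fin n, ∀ x ∈ P (i + 1), ∃ c : R, x - c • w i ∈ P i) {x : M} (hx : x ∈ P n) :
    ∃ p ∈ P 0, ∃ c : Fin n → R, x = p + ∑ i, c i • w i := by
  induction n generalizing x with
  | zero => exact ⟨x, hx, 0, by simp⟩
  | succ n ih =>
    obtain ⟨a, ha⟩ := hspan (Fin.last n) x hx
    obtain ⟨p, hp, c, hc⟩ := ih (fun i => hspan i.castSucc) ha
    refine ⟨p, hp, Fin.snoc c a, ?_⟩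
    simp only [Fin.sum_univ_castSucc, Fin.snoc_castSucc, Fin.snoc_last, ← add_assoc, ← hc,
      sub_add_cancel]

theorem eq_zero_of_sum_smul_mem_flag (hP : Monotone P) {n : ℕ} {w : Fin n → M}
    (hw : ∀ i : Fin n, w i ∈ P (i + 1)) (hindep : ∀ i : Fin n, ∀ c : R, c • w i ∈ P i → c = 0)
    {c : Fin n → R} (hc : ∑ i, c i • w i ∈ P 0) : c = 0 := by
  induction n with
  | zero => exact Subsingleton.elim _ _
  | succ n ih =>
    rw [Fin.sum_univ_castSucc] at hc
    have hinit : ∑ i : Fin n, c i.castSucc • w i.castSucc ∈ P n :=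
      sum_mem fun i _ => Submodule.smul_mem _ _ (hP i.isLt (hw i.castSucc))
    have hlast : c (Fin.last n) = 0 :=
      hindep (Fin.last n) _ (by simpa using sub_mem (hP (Nat.zero_le n) hc) hinit)
    rw [hlast, zero_smul, add_zero] at hc
    have hinit0 := ih (fun i => hw i.castSucc) (fun i => hindep i.castSucc) hc
    funext i
    exact Fin.lastCases hlast (fun i => congrFun hinit0 i) i

end Flag

section PureClosure

variable {G : Type u} [AddCommGroup G]

theorem pureClosure_eq_saturation (A : Set G) : pureClosure A = (span ℤ A).saturation := by
  ext x
  simp only [pureClosure, SetLike.mem_coe, mem_saturation, ← span_int_eq_addSubgroupClosure,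
    mem_toAddSubgroup]
  refine ⟨fun ⟨r, hr, hx⟩ => ⟨r, hr.ne', hx⟩, fun ⟨r, hr, hx⟩ => ?_⟩
  refine ⟨|r|, abs_pos.2 hr, ?_⟩
  rcases abs_choice r with h | h <;> rw [h]
  · exact hx
  · rw [neg_smul]; exact neg_mem hx

theorem IsPureSubgroup.mem_saturation_span_iff {H : AddSubgroup G} (hH : IsPureSubgroup H)
    {x : G} : x ∈ (span ℤ (H : Set G)).saturation ↔ x ∈ H := by
  refine ⟨fun ⟨r, hr, hx⟩ => hH x r hr ?_, fun hx => le_saturation _ (subset_span hx)⟩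
  rwa [← span_int_eq H]

theorem FinIndepOver.notMem_saturation {K : AddSubgroup G} {n : ℕ} {g : Fin n → G}
    (hg : FinIndepOver K g) {s : Set (Fin n)} {i : Fin n} (hi : i ∉ s) :
    g i ∉ (span ℤ ((K : Set G) ∪ g '' s)).saturation := by
  rintro ⟨r, hr, hx⟩
  rw [span_union, mem_sup] at hx
  obtain ⟨y, hy, z, hz, hyz⟩ := hx
  obtain ⟨l, hl, rfl⟩ := (Finsupp.mem_span_image_iff_linearCombination ℤ).1 hz
  have hK : ∑ j, (Pi.single i r - ⇑l : Fin n → ℤ) j • g j ∈ K := by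
    have hyK : y ∈ K := by rwa [← span_int_eq K]
    rw [eq_sub_of_add_eq hyz] at hyK
    simpa [Finsupp.linearCombination_apply, Finsupp.sum_fintype, sub_smul,
      Finset.sum_sub_distrib, Pi.single_apply] using hyK
  have hli : l i = 0 := Finsupp.notMem_support_iff.1 fun h => hi (hl h)
  exact hr (by simpa [hli] using hg _ hK i)

end PureClosure

section SpanPrefix

variable {G : Type u} [AddCommGroup G] {n : ℕ} (K : AddSubgroup G) (g : Fin n → G)

def spanPrefix (k : ℕ) : Submodule ℤ G :=
  span ℤ ((K : Set G) ∪ g '' {j | (j : ℕ) < k})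

theorem IsPureSubgroup.mem_saturation_spanPrefix_zero_iff (hK : IsPureSubgroup K) {x : G} :
    x ∈ (spanPrefix K g 0).saturation ↔ x ∈ K := by
  simpa [spanPrefix] using hK.mem_saturation_span_iff

theorem mem_saturation_spanPrefix_self_iff {x : G} :
    x ∈ (spanPrefix K g n).saturation ↔ x ∈ pureClosure ((K : Set G) ∪ range g) := by
  simp [spanPrefix, ← image_univ, pureClosure_eq_saturation]

theorem spanPrefix_mono : Monotone (spanPrefix K g) := fun _ _ hkl =>
  span_mono (union_subset_union_right _ (image_mono fun _ hj => lt_of_lt_of_le hj hkl))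

theorem spanPrefix_succ_eq_span_le (i : Fin n) :
    spanPrefix K g (i + 1) = span ℤ (K ∪ g '' {j | j ≤ i}) := by
  simp only [spanPrefix, Nat.lt_succ_iff, Fin.val_fin_le]

theorem spanPrefix_succ (i : Fin n) : spanPrefix K g (i + 1) = spanPrefix K g i ⊔ ℤ ∙ g i := by
  have : {j : Fin n | (j : ℕ) < i + 1} = insert i {j : Fin n | (j : ℕ) < i} := by
    ext j
    simp only [mem_ofPred_eq, mem_insert_iff, Fin.ext_iff]
    omega
  rw [spanPrefix, this, image_insert_eq, union_insert, span_insert, sup_comm]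
  rfl

end SpanPrefix

theorem pure_finite_corank_splits_general (H1 : Type u) [AddCommGroup H1]
    (hfin1 : Module.Finite ℤ H1)
    (H0 : AddSubgroup H1)
    (hpure : IsPureSubgroup H0)
    (n : ℕ) (g : Fin n → H1) (hindep : FinIndepOver H0 g)
    (hg : pureClosure ((H0 : Set H1) ∪ Set.range g) = Set.univ) :
    ∃ gs : Fin n → H1,
      (∀ i : Fin n, gs i ∈ pureClosure ((H0 : Set H1) ∪ g '' {j | j ≤ i})) ∧
      ∀ x : H1, ∃! p : H0 × (Fin n → ℤ), x = (p.1 : H1) + ∑ i, p.2 i • gs i := by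
  have := hfin1
  set P : ℕ → Submodule ℤ H1 := fun k => (spanPrefix H0 g k).saturation
  have hstep (i : Fin n) : ∃ w ∈ P (i + 1), (∀ x ∈ P (i + 1), ∃ c : ℤ, x - c • w ∈ P i) ∧
      ∀ c : ℤ, c • w ∈ P i → c = 0 := by
    simp only [P, spanPrefix_succ]
    exact exists_generator_saturation_sup_span_singleton
      (hindep.notMem_saturation (lt_irrefl (i : ℕ)))
  choose gs hgs_mem hgs_span hgs_indep using hstep
  refine ⟨gs, fun i => ?_, fun x => ?_⟩
  · rw [pureClosure_eq_saturation, ← spanPrefix_succ_eq_span_le]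
    exact hgs_mem i
  have hx : x ∈ P n := (mem_saturation_spanPrefix_self_iff H0 g).2 (hg ▸ mem_univ x)
  have hP0 {y : H1} : y ∈ P 0 ↔ y ∈ H0 := hpure.mem_saturation_spanPrefix_zero_iff H0 g
  obtain ⟨p, hp, c, rfl⟩ := exists_mem_add_sum_smul_of_flag hgs_span hx
  refine ⟨(⟨p, hP0.1 hp⟩, c), rfl, fun ⟨p', c'⟩ h => ?_⟩
  have hdiff : ∑ i, (c' - c) i • gs i = p - p' := by
    simp only [Pi.sub_apply, sub_smul, Finset.sum_sub_distrib]
    rw [sub_eq_sub_iff_add_eq_add, add_comm, ← h]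
  have hc : c' = c := sub_eq_zero.1 <| eq_zero_of_sum_smul_mem_flag
    (fun _ _ hkl => saturation_mono (spanPrefix_mono H0 g hkl)) hgs_mem hgs_indep
    (hdiff ▸ sub_mem hp (hP0.2 p'.2))
  subst hc
  exact Prod.ext (Subtype.ext (add_right_cancel h).symm) rfl

/-- Fact: if `H₀` is a pure subgroup of the finite rank free abelian group `H₁`,
`g₀, …, g_{n-1}` are independent over `H₀`, and `H₁` is the pure closure of
`H₀ ∪ {g i : i < n}`, then there are `g*_i` in the pure closure of
`H₀ ∪ {g j : j ≤ i}` with `H₁ = H₀ ⊕ (⊕_{i<n} ℤ g*_i)`. -/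
theorem pure_finite_corank_splits (H1 : Type u) [AddCommGroup H1]
    (hfree1 : Module.Free ℤ H1) (hfin1 : Module.Finite ℤ H1)
    (H0 : AddSubgroup H1)
    (hfree0 : Module.Free ℤ H0) (hfin0 : Module.Finite ℤ H0)
    (hpure : IsPureSubgroup H0)
    (n : ℕ) (g : Fin n → H1) (hindep : FinIndepOver H0 g)
    (hg : pureClosure ((H0 : Set H1) ∪ Set.range g) = Set.univ) :
    ∃ gs : Fin n → H1,
      (∀ i : Fin n, gs i ∈ pureClosure ((H0 : Set H1) ∪ g '' {j | j ≤ i})) ∧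
      ∀ x : H1, ∃! p : H0 × (Fin n → ℤ), x = (p.1 : H1) + ∑ i, p.2 i • gs i :=
  pure_finite_corank_splits_general H1 hfin1 H0 hpure n g hindep hg
end
end

section
/- Let η̄ be an S-ladder system on a stationary set S ⊆ ω₁ of limit ordinals, and suppose η̄ has ℵ₀-uniformization. Then there exist a sequence m̄ = ⟨m_δ : δ ∈ S⟩ of natural numbers and a system ν̄ = ⟨ν_α : α < ω₁⟩ such that: each ν_α is a finite strictly increasing sequence of ordinals < α; and, setting η'_δ(n) = η_δ(n + m_δ), for every δ ∈ S and n < ω one has ν_{η'_δ(n)} = η'_δ ↾ n. -/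
noncomputable section
open Classical Set Pointwise

/-!
Colour `η δ n` by a natural number coding the finite sequence `η δ ↾ n`; this can be done
injectively at each `α < ω₁`, since only countably many finite sequences lie below `α`.
A uniformizing `f` is eventually correct along every ladder, and `m δ` is the least point from
which it is correct on `η δ`. To define `ν α`, decode `f α` to the increasing sequence `s`
below `α` carrying that code, and remove from `s` the shortest initial segment after which every
entry of `s` carries the code of its predecessors in `s`. At `α = η δ (n + m δ)` the decoded
sequence is `η δ ↾ (n + m δ)`, and by minimality of `m δ` the removed segment is `η δ ↾ m δ`.
-/

lemma countable_Iio_of_lt_omega1 {α : Ordinal} (h : α < omega1) : (Iio α).Countable := by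
  rw [← Cardinal.le_aleph0_iff_set_countable, Cardinal.mk_Iio_ordinal, Cardinal.lift_le_aleph0,
    ← Cardinal.lt_aleph_one_iff]
  exact Cardinal.lt_ord.mp h

lemma Set.Countable.setOf_list_forall_mem {X : Type*} {A : Set X} (hA : A.Countable) :
    {s : List X | ∀ x ∈ s, x ∈ A}.Countable := by
  have := hA.to_subtype
  refine (countable_range (List.map ((↑) : A → X))).mono fun s hs => ?_
  lift s to List A using hs
  exact ⟨s, rfl⟩

lemma exists_injOn_lists_lt_omega1 : ∃ E : Ordinal → List Ordinal → ℕ,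
    ∀ α < omega1, InjOn (E α) {s | ∀ β ∈ s, β < α} := by
  have (α : Ordinal) : ∃ e : List Ordinal → ℕ, α < omega1 → InjOn e {s | ∀ β ∈ s, β < α} := by
    by_cases h : α < omega1
    · obtain ⟨e, he⟩ := countable_iff_exists_injOn.mp
        (countable_Iio_of_lt_omega1 h).setOf_list_forall_mem
      exact ⟨e, fun _ => he⟩
    · exact ⟨fun _ => 0, fun h' => absurd h' h⟩
  choose E hE using this
  exact ⟨E, hE⟩

namespace CodedList

variable {X : Type*} (f : X → ℕ) (E : X → List X → ℕ)

def IsCodedFrom (s : List X) (j : ℕ) : Prop :=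
  ∀ i (hi : i < s.length), j ≤ i → f s[i] = E s[i] (s.take i)

lemma isCodedFrom_length (s : List X) : IsCodedFrom f E s s.length :=
  fun _ hi hle => absurd hi (not_lt.mpr hle)

def dropUncoded (s : List X) : List X :=
  s.drop (Nat.find ⟨s.length, isCodedFrom_length f E s⟩)

lemma isCodedFrom_map_range_iff (x : ℕ → X) (k j : ℕ) :
    IsCodedFrom f E ((List.range k).map x) j ↔
      ∀ i, j ≤ i → i < k → f (x i) = E (x i) ((List.range i).map x) := by
  refine forall_congr' fun i => ⟨fun h hji hik => ?_, fun h hik hji => ?_⟩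
  · have := h (by simpa using hik) hji
    rwa [List.getElem_map, List.getElem_range, ← List.map_take, List.take_range,
      min_eq_left hik.le] at this
  · have hik : i < k := by simpa using hik
    rw [List.getElem_map, List.getElem_range, ← List.map_take, List.take_range,
      min_eq_left hik.le]
    exact h hji hik

lemma dropUncoded_sublist (s : List X) : (dropUncoded f E s).Sublist s :=
  List.drop_sublist _ _

lemma dropUncoded_map_range (x : ℕ → X)
    (h : ∃ M, ∀ i ≥ M, f (x i) = E (x i) ((List.range i).map x)) (n : ℕ) :
    dropUncoded f E ((List.range (n + Nat.find h)).map x) =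
      (List.range n).map fun j => x (j + Nat.find h) := by
  have hfind : Nat.find ⟨_, isCodedFrom_length f E ((List.range (n + Nat.find h)).map x)⟩ =
      Nat.find h := by
    rw [Nat.find_eq_iff, isCodedFrom_map_range_iff]
    refine ⟨fun i hi _ => Nat.find_spec h i hi, fun j hj hcoded => Nat.find_min h hj fun i hi => ?_⟩
    by_cases hik : i < n + Nat.find h
    · exact (isCodedFrom_map_range_iff f E x _ j).1 hcoded i hi hik
    · exact Nat.find_spec h i (by omega)
  rw [dropUncoded, hfind, Nat.add_comm, List.range_add, List.map_append,
    List.drop_left' (by simp), List.map_map]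
  simp [Function.comp_def, Nat.add_comm]

variable [LT X]

def decode (a : X) : List X :=
  if h : ∃ s : List X, s.Pairwise (· < ·) ∧ (∀ b ∈ s, b < a) ∧ f a = E a s then h.choose else []

lemma pairwise_lt_and_forall_lt_decode (a : X) :
    (decode f E a).Pairwise (· < ·) ∧ ∀ b ∈ decode f E a, b < a := by
  unfold decode
  split_ifs with h
  · exact ⟨h.choose_spec.1, h.choose_spec.2.1⟩
  · simp

lemma decode_eq {a : X} (hE : InjOn (E a) {s | ∀ b ∈ s, b < a}) {s : List X}
    (hs : s.Pairwise (· < ·)) (hsa : ∀ b ∈ s, b < a) (hfa : f a = E a s) : decode f E a = s := by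
  have h : ∃ s : List X, s.Pairwise (· < ·) ∧ (∀ b ∈ s, b < a) ∧ f a = E a s := ⟨s, hs, hsa, hfa⟩
  rw [decode, dif_pos h]
  exact hE h.choose_spec.2.1 hsa (h.choose_spec.2.2.symm.trans hfa)

end CodedList

lemma StrictMono.pairwise_lt_map_range {X : Type*} [Preorder X] {x : ℕ → X} (hx : StrictMono x)
    (k : ℕ) : ((List.range k).map x).Pairwise (· < ·) :=
  List.pairwise_lt_range.map x fun _ _ h => hx h

lemma StrictMono.forall_lt_of_mem_map_range {X : Type*} [Preorder X] {x : ℕ → X}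
    (hx : StrictMono x) (k : ℕ) : ∀ b ∈ (List.range k).map x, b < x k := by
  simp only [List.mem_map, List.mem_range, forall_exists_index, and_imp]
  rintro _ i hi rfl
  exact hx hi

open CodedList in
theorem coherent_initial_segments_general (S : Set Ordinal) (hS : IsStationaryOmega1 S)
    (η : Ordinal → ℕ → Ordinal) (hη : IsLadderSystem S η)
    (hunif : HasUnif S η) :
    ∃ (m : Ordinal → ℕ) (ν : Ordinal → List Ordinal),
      (∀ α : Ordinal, (ν α).Pairwise (· < ·) ∧ ∀ β ∈ ν α, β < α) ∧
      ∀ δ ∈ S, ∀ n : ℕ,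
        ν (η δ (n + m δ)) = (List.range n).map fun j => η δ (j + m δ) := by
  obtain ⟨E, hE⟩ := exists_injOn_lists_lt_omega1
  obtain ⟨f, hf⟩ := hunif fun δ n => E (η δ n) ((List.range n).map (η δ))
  refine ⟨fun δ => if h : δ ∈ S then Nat.find (hf δ h) else 0,
    fun α => dropUncoded f E (decode f E α), fun α => ?_, fun δ hδ n => ?_⟩
  · obtain ⟨hsorted, hlt⟩ := pairwise_lt_and_forall_lt_decode f E α
    exact ⟨hsorted.sublist (dropUncoded_sublist f E _),
      fun β hβ => hlt β ((dropUncoded_sublist f E _).subset hβ)⟩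
  · obtain ⟨hmono, hlt, -⟩ := hη δ hδ
    have hω : η δ (n + Nat.find (hf δ hδ)) < omega1 := (hlt _).trans (hS.1 hδ)
    simp only [dif_pos hδ]
    rw [decode_eq f E (hE _ hω) (hmono.pairwise_lt_map_range _)
      (hmono.forall_lt_of_mem_map_range _) (Nat.find_spec (hf δ hδ) _ (Nat.le_add_left _ _)),
      dropUncoded_map_range]

/-- Claim: from ℵ₀-uniformization one gets, after removing an initial segment
`m_δ` from each ladder, a coherent system `ν̄` of finite increasing sequences with
`ν_{η'_δ(n)} = η'_δ ↾ n` where `η'_δ(n) = η_δ(n + m_δ)`. -/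
theorem coherent_initial_segments (S : Set Ordinal) (hS : IsStationaryOmega1 S)
    (hlim : ∀ δ ∈ S, Order.IsSuccLimit δ)
    (η : Ordinal → ℕ → Ordinal) (hη : IsLadderSystem S η)
    (hunif : HasUnif S η) :
    ∃ (m : Ordinal → ℕ) (ν : Ordinal → List Ordinal),
      (∀ α : Ordinal, (ν α).Pairwise (· < ·) ∧ ∀ β ∈ ν α, β < α) ∧
      ∀ δ ∈ S, ∀ n : ℕ,
        ν (η δ (n + m δ)) = (List.range n).map fun j => η δ (j + m δ) :=
  coherent_initial_segments_general S hS η hη hunif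
end
end

section
/- Let η̄ be an S-ladder system on a stationary set S ⊆ ω₁ of limit ordinals, and suppose η̄ has ℵ₀-uniformization. Then there exist a sequence m̄ = ⟨m_δ : δ ∈ S⟩ of natural numbers and a sequence Ā = ⟨A_n : n < ω⟩ such that Ā is a (η̄ − m̄)-rank, where η̄ − m̄ is the S-ladder system defined by (η̄−m̄)_δ(n) = η_δ(n + m_δ). -/
noncomputable section
open Classical Set Pointwise

/-- A club (closed unbounded) subset of ω₁. -/
def IsClub' (C : Set Ordinal) : Prop :=
  C ⊆ Set.Iio omega1 ∧
  (∀ α < omega1, ∃ β ∈ C, α < β) ∧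
  (∀ α < omega1, Order.IsSuccLimit α → (∀ β < α, ∃ γ ∈ C, β < γ ∧ γ < α) → α ∈ C)

/-- A stationary subset of ω₁. -/
def IsStationary' (S : Set Ordinal) : Prop :=
  S ⊆ Set.Iio omega1 ∧ ∀ C, IsClub' C → (S ∩ C).Nonempty

/-- `A` is an `η̄`-rank for the ladder system `η` on `S`: a partition of
`S ∪ ⋃_{δ∈S} ran(η_δ)` such that ladders of points of `A n` lie in `A (n+1)`. -/
def IsLadderRank (S : Set Ordinal) (η : Ordinal → ℕ → Ordinal)
    (A : ℕ → Set Ordinal) : Prop :=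
  (∀ m n : ℕ, m ≠ n → Disjoint (A m) (A n)) ∧
  ((⋃ n, A n) = S ∪ ⋃ δ ∈ S, Set.range (η δ)) ∧
  (∀ n : ℕ, ∀ δ ∈ S, δ ∈ A n → Set.range (η δ) ⊆ A (n + 1))

/-!
It suffices to find `e : ω₁ → ℕ` and trims `m_δ` with `e (η_δ k) = e δ + 1` for all `k ≥ m_δ`:
then `A_n := e⁻¹{n}` is a rank. Uniformizing the colouring `η_δ(n) ↦ n` gives a level `lv`
with `lv (η_δ k) = k` on tails, and uniformizing `η_δ(n) ↦ lv δ` gives `lam` with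
`lam (η_δ k) = lv δ` there; trimming beyond `lv δ` as well, every point of a tail knows the
smaller level of its parents. Now define `e` by recursion on levels: `e y` is one more than the
value at `y` of a uniformizer of `η_δ(n) ↦ e δ`, where `e` is only needed at level `lam y < lv y`.
-/

def levelRec {α : Type*} (u : (α → ℕ) → α → ℕ) (lam : α → ℕ) : ℕ → α → ℕ
  | ℓ, x => if lam x < ℓ then u (levelRec u lam (lam x)) x + 1 else 0

theorem levelRec_of_lt {α : Type*} (u : (α → ℕ) → α → ℕ) (lam : α → ℕ) {ℓ : ℕ} {x : α}
    (h : lam x < ℓ) : levelRec u lam ℓ x = u (levelRec u lam (lam x)) x + 1 := by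
  rw [levelRec, if_pos h]

namespace HasUnif

variable {S : Set Ordinal} {η : Ordinal → ℕ → Ordinal}

theorem exists_uniformizer_trim (h : HasUnif S η) :
    ∃ u t : (Ordinal → ℕ → ℕ) → Ordinal → ℕ,
      ∀ c, ∀ δ ∈ S, ∀ n ≥ t c δ, u c (η δ n) = c δ n := by
  have : ∀ c : Ordinal → ℕ → ℕ, ∃ f t : Ordinal → ℕ, ∀ δ ∈ S, ∀ n ≥ t δ, f (η δ n) = c δ n := by
    intro c
    obtain ⟨f, hf⟩ := h c
    choose! t ht using hf
    exact ⟨f, t, ht⟩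
  choose u t hu using this
  exact ⟨u, t, hu⟩

theorem exists_succ_on_tails (h : HasUnif S η) :
    ∃ e m : Ordinal → ℕ, ∀ δ ∈ S, ∀ k ≥ m δ, e (η δ k) = e δ + 1 := by
  obtain ⟨u, t, hu⟩ := h.exists_uniformizer_trim
  set lv := u fun _ n => n
  set lam := u fun δ _ => lv δ
  set R := levelRec (fun f => u fun δ _ => f δ) lam
  refine ⟨fun x => R (lv x) x,
    fun δ => t (fun _ n => n) δ ⊔ t (fun δ _ => lv δ) δ ⊔ (lv δ + 1) ⊔ t (fun q _ => R (lv δ) q) δ,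
    fun δ hδ k hk => ?_⟩
  simp only [ge_iff_le, max_le_iff] at hk
  obtain ⟨⟨⟨hk_lv, hk_lam⟩, hk_gt⟩, hk_R⟩ := hk
  have hlv : lv (η δ k) = k := hu _ δ hδ k hk_lv
  have hlam : lam (η δ k) = lv δ := hu _ δ hδ k hk_lam
  calc R (lv (η δ k)) (η δ k)
      = u (fun q _ => R (lam (η δ k)) q) (η δ k) + 1 := by
        rw [hlv]; exact levelRec_of_lt _ _ (by omega)
    _ = R (lv δ) δ + 1 := by rw [hlam, hu _ δ hδ k hk_R]

end HasUnif

theorem isLadderRank_of_succ {S : Set Ordinal} {η : Ordinal → ℕ → Ordinal} (e : Ordinal → ℕ)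
    (he : ∀ δ ∈ S, ∀ k, e (η δ k) = e δ + 1) :
    IsLadderRank S η fun n => {x | x ∈ S ∪ ⋃ δ ∈ S, range (η δ) ∧ e x = n} := by
  refine ⟨fun i j hij => disjoint_left.2 fun x hi hj => hij (hi.2 ▸ hj.2), ?_, ?_⟩
  · ext x
    simp only [mem_iUnion, mem_ofPred_eq]
    exact ⟨fun ⟨_, hx, _⟩ => hx, fun hx => ⟨e x, hx, rfl⟩⟩
  · rintro n δ hδ ⟨-, rfl⟩ _ ⟨k, rfl⟩
    exact ⟨Or.inr (mem_biUnion hδ ⟨k, rfl⟩), he δ hδ k⟩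

theorem ladder_rank_exists_general (S : Set Ordinal)
    (η : Ordinal → ℕ → Ordinal)
    (hunif : HasUnif S η) :
    ∃ (m : Ordinal → ℕ) (A : ℕ → Set Ordinal),
      IsLadderRank S (fun δ k => η δ (k + m δ)) A := by
  obtain ⟨e, m, he⟩ := hunif.exists_succ_on_tails
  exact ⟨m, _, isLadderRank_of_succ e fun δ hδ k => he δ hδ _ (Nat.le_add_left _ _)⟩

/-- Claim: from ℵ₀-uniformization, after removing an initial segment `m_δ` from each
ladder, the resulting ladder system admits a rank. -/
theorem ladder_rank_exists (S : Set Ordinal) (hS : IsStationary' S)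
    (hlim : ∀ δ ∈ S, Order.IsSuccLimit δ)
    (η : Ordinal → ℕ → Ordinal) (hη : IsLadderSystem S η)
    (hunif : HasUnif S η) :
    ∃ (m : Ordinal → ℕ) (A : ℕ → Set Ordinal),
      IsLadderRank S (fun δ k => η δ (k + m δ)) A :=
  ladder_rank_exists_general S η hunif
end
end

section
/- Let p = (S, η̄, v̄, Ψ) be a very special S-uniformization problem whose ladder system η̄ has ℵ₀-uniformization. Then there exist a sequence m̄ = ⟨m_δ : δ ∈ S⟩ of natural numbers and a (p ∖ m̄)-pressed down system w̄ = ⟨w_α : α < ω₁⟩. -/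
noncomputable section
open Classical Set Pointwise

/-- The data of an `S`-uniformization problem: a set `S`, a ladder system `η` on `S`,
finite sets `u δ n ⊆ η δ n`, and for each finite set `b` of ordinals (only the basic
sets matter) a family `Ψ b` of colourings; a colouring is represented by a total
function `Ordinal → C`, where only its values on `b` are relevant. -/
structure UProblem (C : Type) where
  S : Set Ordinal
  η : Ordinal → ℕ → Ordinal
  u : Ordinal → ℕ → Finset Ordinal
  Ψ : Finset Ordinal → Set (Ordinal → C)

/-- The trace of a family `F` of colourings on a finite set `b`: the lists of values
along the increasing enumeration of `b`.  (Composition with the order isomorphism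
`OP_{b,|b|}`.) -/
def UTrace {C : Type} (b : Finset Ordinal) (F : Set (Ordinal → C)) : Set (List C) :=
  {l | ∃ f ∈ F, l = (b.sort (· ≤ ·)).map f}

namespace UProblem

variable {C : Type} (p : UProblem C)

/-- The basic set `b^δ_{n,k} = ⋃_{j ≤ n} (u_{δ,j} ∪ {η_δ(j)}) ∪ [δ, δ+k]`. -/
def basicSet (δ : Ordinal) (n k : ℕ) : Finset Ordinal :=
  ((Finset.range (n + 1)).biUnion fun j => insert (p.η δ j) (p.u δ j)) ∪
    (Finset.range (k + 1)).image fun i : ℕ => δ + (i : Ordinal)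

/-- `b` is a basic set of the problem. -/
def IsBasic (b : Finset Ordinal) : Prop :=
  ∃ δ ∈ p.S, ∃ n k : ℕ, b = p.basicSet δ n k

/-- A set `x ⊆ ω₁` is `p`-closed. -/
def Closed (x : Set Ordinal) : Prop :=
  (∀ α : Ordinal, α + 1 ∈ x → α ∈ x) ∧
  ∀ δ ∈ p.S, δ ∈ x → ∃ N : ℕ∞, 0 < N ∧ ∀ k : ℕ,
    (p.η δ k ∈ x ↔ (k : ℕ∞) < N) ∧
    ((Set.Ico (p.η δ k) (p.η δ (k + 1)) ∩ x).Nonempty → p.η δ k ∈ x) ∧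
    (p.η δ k ∈ x → ∀ β ∈ p.u δ k, β ∈ x)

/-- `Ψ⁺(v)`: the colourings whose restriction to every basic subset `b` of `v`
belongs to `Ψ(b)`. -/
def Ψplus (v : Finset Ordinal) : Set (Ordinal → C) :=
  {f | ∀ b : Finset Ordinal, p.IsBasic b → b ⊆ v → f ∈ p.Ψ b}

/-- `p` is a special `S`-uniformization problem. -/
def IsSpecial : Prop :=
  IsStationaryOmega1 p.S ∧
  (∀ δ ∈ p.S, Order.IsSuccLimit δ) ∧
  IsLadderSystem p.S p.η ∧
  (∀ δ ∈ p.S, ∀ n : ℕ, ∀ β ∈ p.u δ n, β < p.η δ n) ∧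
  (∀ b : Finset Ordinal, ∀ f g : Ordinal → C,
      (∀ α ∈ b, f α = g α) → f ∈ p.Ψ b → g ∈ p.Ψ b) ∧
  (∀ b, p.IsBasic b → (p.Ψ b).Nonempty ∧ (UTrace b (p.Ψ b)).Countable) ∧
  (∃ Υ : ℕ → Set (Set (List C)), (∀ n, (Υ n).Countable) ∧
      ∀ b, p.IsBasic b → UTrace b (p.Ψ b) ∈ Υ b.card) ∧
  (∀ v : Finset Ordinal, (p.Ψplus v).Nonempty ∧ (UTrace v (p.Ψplus v)).Countable) ∧
  (∀ b b' : Finset Ordinal, p.IsBasic b → p.IsBasic b' → b ⊆ b' →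
      ∀ f ∈ p.Ψ b', f ∈ p.Ψ b) ∧
  (∀ v w : Finset Ordinal, v ⊆ w → p.Closed ↑v → ∀ f ∈ p.Ψplus v,
      ∃ f' ∈ p.Ψplus w, ∀ α ∈ v, f' α = f α)

/-- `f` is a solution of the problem `p`. -/
def Solution (f : Ordinal → C) : Prop :=
  ∀ v : Finset Ordinal, f ∈ p.Ψplus v

/-- The problem `p` is simple: `α + ω ∉ S` for all `α`. -/
def IsSimple : Prop := ∀ α : Ordinal, α + Ordinal.omega0 ∉ p.S

end UProblem

namespace UProblem

variable {C : Type}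

/-- `p` is a very special `S`-uniformization problem, witnessed by `v`. -/
def IsVerySpecial (p : UProblem C) (v : Ordinal → Finset Ordinal) : Prop :=
  p.IsSpecial ∧
  (∀ δ ∈ p.S, ∀ n : ℕ, insert (p.η δ n) (p.u δ n) ⊆ p.u δ (n + 1)) ∧
  (∀ δ ∈ p.S, (⋃ n, (p.u δ n : Set Ordinal)) = Set.Iio δ) ∧
  (∀ α : Ordinal, ∀ β ∈ v α, β < α) ∧
  (∀ δ ∈ p.S, ∀ n : ℕ, p.u δ n = v (p.η δ n))

/-- The problem `p ∖ m̄`, obtained by removing the first `m δ` steps of each ladder.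
(On the new basic sets, `Ψ` is unchanged.) -/
def drop (p : UProblem C) (m : Ordinal → ℕ) : UProblem C where
  S := p.S
  η := fun δ n => p.η δ (n + m δ)
  u := fun δ n => p.u δ (n + m δ)
  Ψ := p.Ψ

/-- `w̄` is a `p`-pressed down system (relative to the witness `v̄`). -/
def PressedDown (p : UProblem C) (v w : Ordinal → Finset Ordinal) : Prop :=
  (∀ α : Ordinal, (∀ β ∈ w α, β < α) ∧ p.Closed ↑(w α)) ∧
  (∀ δ ∈ p.S, ∀ n : ℕ,
      v (p.η δ n) ⊆ w (p.η δ n) ∧ w (p.η δ n) ⊆ w (p.η δ (n + 1))) ∧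
  (∀ δ ∈ p.S, ∀ n : ℕ, w δ ⊆ w (p.η δ n))

end UProblem

/-!
Choose `m δ` with `v δ ⊆ u δ (m δ)`: `v δ` is a finite subset of `δ = ⋃ n, u δ n` and the
`u δ n` increase. Let `w α` be the least `(p ∖ m̄)`-closed set containing `v α`. Closed sets are
stable under intersections, so `w` is monotone in `v α`; as `v (η δ n) = u δ n` increases along
each ladder and contains `v δ` from `m δ` on, `w` is pressed down. It remains that the closure of a
finite set `x` is finite and bounded by `x`: close `x` off from the top down, adding for each
element `μ` its predecessor and, if `μ ∈ S`, an initial segment of its ladder (with the sets `u`)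
long enough to pass every element already present below `μ`.
-/

theorem ENat.coe_lt_iInf_iff {ι : Sort*} {f : ι → ℕ∞} {k : ℕ} :
    (k : ℕ∞) < ⨅ i, f i ↔ ∀ i, (k : ℕ∞) < f i := by
  simp only [← ENat.add_one_le_iff (ENat.natCast_ne_top k), le_iInf_iff]

theorem IsLadderSystem.shift {S : Set Ordinal} {η : Ordinal → ℕ → Ordinal}
    (hη : IsLadderSystem S η) (m : Ordinal → ℕ) :
    IsLadderSystem S fun δ n => η δ (n + m δ) := by
  intro δ hδ
  obtain ⟨hmono, hlt, hcof⟩ := hη δ hδ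
  refine ⟨fun a b hab => hmono (by omega), fun n => hlt _, fun β hβ => ?_⟩
  obtain ⟨n, hn⟩ := hcof β hβ
  exact ⟨n, hn.trans_le (hmono.monotone (by omega))⟩

namespace UProblem

variable {C : Type} {q : UProblem C}

theorem closed_sInter {𝒮 : Set (Set Ordinal)} (h : ∀ Y ∈ 𝒮, q.Closed Y) :
    q.Closed (⋂₀ 𝒮) := by
  refine ⟨fun α hα Y hY => (h Y hY).1 α (hα Y hY), fun δ hδS hδ => ?_⟩
  choose N hN0 hN using fun Y : 𝒮 => (h Y Y.2).2 δ hδS (hδ Y Y.2)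
  have hmem (k : ℕ) : q.η δ k ∈ ⋂₀ 𝒮 ↔ (k : ℕ∞) < ⨅ Y, N Y := by
    rw [ENat.coe_lt_iInf_iff, Set.mem_sInter, Subtype.forall]
    exact forall₂_congr fun Y hY => (hN ⟨Y, hY⟩ k).1
  refine ⟨⨅ Y, N Y, ?_, fun k => ⟨hmem k, ?_, ?_⟩⟩
  · exact_mod_cast (hmem 0).1 fun Y hY => (hN ⟨Y, hY⟩ 0).1.2 (hN0 _)
  · rintro ⟨γ, hγ, hγ𝒮⟩ Y hY
    exact (hN ⟨Y, hY⟩ k).2.1 ⟨γ, hγ, hγ𝒮 Y hY⟩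
  · intro hk β hβ Y hY
    exact (hN ⟨Y, hY⟩ k).2.2 (hk Y hY) β hβ

def closure (q : UProblem C) : ClosureOperator (Set Ordinal) :=
  ClosureOperator.ofCompletePred q.Closed fun _ => closed_sInter

theorem closed_empty : q.Closed ∅ :=
  ⟨fun _ h => h, fun _ _ h => h.elim⟩

theorem closed_insert (hη : IsLadderSystem q.S q.η) {Y : Set Ordinal} {μ : Ordinal}
    (hY : q.Closed Y) (hYμ : ∀ β ∈ Y, β < μ) (hpred : ∀ β, β + 1 = μ → β ∈ Y)
    (hμ : μ ∈ q.S → ∃ N : ℕ, 0 < N ∧ (∀ k < N, q.η μ k ∈ Y ∧ ↑(q.u μ k) ⊆ Y) ∧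
      ∀ β ∈ Y, β < q.η μ N) :
    q.Closed (insert μ Y) := by
  have mem_iff {β : Ordinal} (hβ : β < μ) : β ∈ insert μ Y ↔ β ∈ Y :=
    or_iff_right hβ.ne
  refine ⟨fun α hα => Or.inr (hα.elim (hpred α) (hY.1 α)), fun δ hδS hδ => ?_⟩
  obtain ⟨hmono, hlt, -⟩ := hη δ hδS
  rcases hδ with rfl | hδY
  · obtain ⟨N, hN0, hprefix, hbound⟩ := hμ hδS
    have hk (k : ℕ) : q.η δ k ∈ insert δ Y ↔ k < N := by
      rw [mem_iff (hlt k)]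
      exact ⟨fun h => hmono.lt_iff_lt.1 (hbound _ h), fun h => (hprefix k h).1⟩
    refine ⟨N, by exact_mod_cast hN0, fun k => ⟨by rw [hk]; norm_cast, ?_, ?_⟩⟩
    · rintro ⟨γ, ⟨hkγ, hγk⟩, hγ⟩
      have hγN := hbound γ ((mem_iff (hγk.trans (hlt _))).1 hγ)
      exact (hk k).2 (hmono.lt_iff_lt.1 (hkγ.trans_lt hγN))
    · exact fun h β hβ => Or.inr ((hprefix k ((hk k).1 h)).2 hβ)
  · obtain ⟨N, hN0, hN⟩ := hY.2 δ hδS hδY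
    have hδμ := hYμ δ hδY
    refine ⟨N, hN0, fun k => ?_⟩
    rw [mem_iff ((hlt k).trans hδμ)]
    refine ⟨(hN k).1, fun ⟨γ, hγI, hγ⟩ => (hN k).2.1 ⟨γ, hγI, ?_⟩,
      fun h β hβ => Or.inr ((hN k).2.2 h β hβ)⟩
    exact (mem_iff (hγI.2.trans ((hlt _).trans hδμ))).1 hγ

section Construction

variable (hη : IsLadderSystem q.S q.η) (hu : ∀ δ ∈ q.S, ∀ n, ∀ β ∈ q.u δ n, β < q.η δ n)
include hη hu

theorem exists_finset_lt_closing_insert (μ : Ordinal) (G : Finset Ordinal) :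
    ∃ D : Finset Ordinal, (∀ β ∈ D, β < μ) ∧ (∀ β, β + 1 = μ → β ∈ D) ∧
      (μ ∈ q.S → ∃ N : ℕ, 0 < N ∧ (∀ k < N, q.η μ k ∈ D ∧ q.u μ k ⊆ D) ∧
        ∀ β ∈ G ∪ D, β < μ → β < q.η μ N) := by
  classical
  set P : Finset Ordinal := Finset.filter (· < μ) {Ordinal.pred μ}
  have hP : ∀ β ∈ P, β < μ := by simp [P]
  have hpred : ∀ β, β + 1 = μ → β ∈ P := by rintro β rfl; simp [P]
  by_cases hμ : μ ∈ q.S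
  swap
  · exact ⟨P, hP, hpred, fun h => absurd h hμ⟩
  obtain ⟨hmono, hlt, hcof⟩ := hη μ hμ
  obtain ⟨N, hN⟩ : ∃ N : ℕ, ∀ β ∈ (G ∪ P).filter (· < μ), β ∈ Set.Iio (q.η μ (N + 1)) := by
    refine Directed.exists_mem_subset_of_finset_subset_biUnion
      (Monotone.directed_le fun i j hij => Set.Iio_subset_Iio (hmono.monotone (by omega)))
      fun β hβ => ?_
    obtain ⟨n, hn⟩ := hcof β (Finset.mem_filter.1 hβ).2
    exact Set.mem_iUnion.2 ⟨n, hn.trans (hmono n.lt_succ_self)⟩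
  set L := (Finset.range (N + 1)).biUnion fun k => insert (q.η μ k) (q.u μ k)
  have hL : ∀ β ∈ L, β < q.η μ (N + 1) := by
    simp only [L, Finset.mem_biUnion, Finset.mem_range, Finset.mem_insert]
    rintro β ⟨k, hk, rfl | hβ⟩
    exacts [hmono hk, (hu μ hμ k β hβ).trans (hmono hk)]
  refine ⟨P ∪ L, ?_, fun β hβ => Finset.mem_union_left _ (hpred β hβ),
    fun _ => ⟨N + 1, N.succ_pos, fun k hk => ⟨?_, ?_⟩, ?_⟩⟩
  · simp only [Finset.mem_union]
    rintro β (hβ | hβ)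
    exacts [hP β hβ, (hL β hβ).trans (hlt _)]
  · exact Finset.mem_union_right _ (Finset.mem_biUnion.2 ⟨k, Finset.mem_range.2 hk,
      Finset.mem_insert_self _ _⟩)
  · exact fun β hβ => Finset.mem_union_right _ (Finset.mem_biUnion.2 ⟨k, Finset.mem_range.2 hk,
      Finset.mem_insert_of_mem hβ⟩)
  · intro β hβ hβμ
    rw [← Finset.union_assoc, Finset.mem_union] at hβ
    exact hβ.elim (fun h => hN β (Finset.mem_filter.2 ⟨h, hβμ⟩)) (hL β)

theorem exists_closed_finset_superset (x : Finset Ordinal) :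
    ∃ Y : Finset Ordinal, x ⊆ Y ∧ q.Closed ↑Y ∧ ∀ β ∈ Y, ∃ γ ∈ x, β ≤ γ := by
  classical
  suffices H : ∀ μ, ∀ x : Finset Ordinal, (∀ β ∈ x, β < μ) →
      ∃ Y : Finset Ordinal, x ⊆ Y ∧ q.Closed ↑Y ∧ ∀ β ∈ Y, ∃ γ ∈ x, β ≤ γ from
    H _ x fun β hβ => (x.le_sup (f := id) hβ).trans_lt (Order.lt_succ _)
  intro μ
  induction μ using WellFoundedLT.induction with | _ μ IH => ?_
  intro x hxμ
  rcases x.eq_empty_or_nonempty with rfl | hne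
  · exact ⟨∅, subset_rfl, by simpa using closed_empty, by simp⟩
  -- Close off the largest element `μ'` of `x` first: everything it forces lies below it.
  set μ' := x.max' hne
  obtain ⟨D, hDμ', hDpred, hDS⟩ := exists_finset_lt_closing_insert hη hu μ' (x.erase μ')
  set x' := x.erase μ' ∪ D
  have hx'μ' : ∀ β ∈ x', β < μ' := by
    simp only [x', Finset.mem_union, Finset.mem_erase]
    rintro β (⟨hne', hβ⟩ | hβ)
    exacts [(x.le_max' β hβ).lt_of_ne hne', hDμ' β hβ]
  obtain ⟨Y, hx'Y, hY, hYx'⟩ := IH μ' (hxμ _ (x.max'_mem hne)) x' hx'μ'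
  have hYμ' : ∀ β ∈ Y, β < μ' := fun β hβ =>
    let ⟨γ, hγ, hβγ⟩ := hYx' β hβ
    hβγ.trans_lt (hx'μ' γ hγ)
  refine ⟨insert μ' Y, fun β hβ => ?_, ?_, fun β hβ => ?_⟩
  · rcases eq_or_ne β μ' with rfl | hne'
    · exact Finset.mem_insert_self _ _
    · exact Finset.mem_insert_of_mem
        (hx'Y (Finset.mem_union_left _ (Finset.mem_erase.2 ⟨hne', hβ⟩)))
  · rw [Finset.coe_insert]
    refine closed_insert hη hY hYμ' (fun β hβ => hx'Y (Finset.mem_union_right _ (hDpred β hβ)))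
      fun hS => ?_
    obtain ⟨N, hN0, hND, hNbd⟩ := hDS hS
    refine ⟨N, hN0, fun k hk => ⟨hx'Y (Finset.mem_union_right _ (hND k hk).1), ?_⟩, fun β hβ => ?_⟩
    · exact Finset.coe_subset.2 (((hND k hk).2.trans Finset.subset_union_right).trans hx'Y)
    · obtain ⟨γ, hγ, hβγ⟩ := hYx' β hβ
      exact hβγ.trans_lt (hNbd γ hγ (hx'μ' γ hγ))
  · rcases Finset.mem_insert.1 hβ with rfl | hβ
    · exact ⟨_, x.max'_mem hne, le_rfl⟩
    obtain ⟨γ, hγ, hβγ⟩ := hYx' β hβ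
    rcases Finset.mem_union.1 hγ with hγ | hγ
    · exact ⟨γ, Finset.mem_of_mem_erase hγ, hβγ⟩
    · exact ⟨μ', x.max'_mem hne, hβγ.trans (hDμ' γ hγ).le⟩

theorem exists_finset_eq_closure (x : Finset Ordinal) :
    ∃ Y : Finset Ordinal, (Y : Set Ordinal) = q.closure x ∧ ∀ β ∈ Y, ∃ γ ∈ x, β ≤ γ := by
  obtain ⟨Y, hxY, hY, hYx⟩ := exists_closed_finset_superset hη hu x
  have hsub : q.closure x ⊆ Y := q.closure.closure_min (Finset.coe_subset.2 hxY) hY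
  have hfin : (q.closure x).Finite := Y.finite_toSet.subset hsub
  exact ⟨hfin.toFinset, hfin.coe_toFinset, fun β hβ => hYx β (hsub (hfin.mem_toFinset.1 hβ))⟩

end Construction

namespace IsVerySpecial

variable {p : UProblem C} {v : Ordinal → Finset Ordinal}

theorem isLadderSystem (hvs : p.IsVerySpecial v) : IsLadderSystem p.S p.η :=
  hvs.1.2.2.1

theorem u_lt (hvs : p.IsVerySpecial v) : ∀ δ ∈ p.S, ∀ n, ∀ β ∈ p.u δ n, β < p.η δ n :=
  hvs.1.2.2.2.1

theorem v_lt (hvs : p.IsVerySpecial v) : ∀ α, ∀ β ∈ v α, β < α :=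
  hvs.2.2.2.1

theorem u_mono (hvs : p.IsVerySpecial v) {δ : Ordinal} (hδ : δ ∈ p.S) : Monotone (p.u δ) :=
  monotone_nat_of_le_succ fun n => (Finset.subset_insert _ _).trans (hvs.2.1 δ hδ n)

theorem exists_v_subset_u (hvs : p.IsVerySpecial v) {δ : Ordinal} (hδ : δ ∈ p.S) :
    ∃ n, v δ ⊆ p.u δ n := by
  have hcover : (v δ : Set Ordinal) ⊆ ⋃ n, (p.u δ n : Set Ordinal) := by
    rw [hvs.2.2.1 δ hδ]
    exact fun β hβ => hvs.v_lt δ β hβ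
  obtain ⟨n, hn⟩ := Directed.exists_mem_subset_of_finset_subset_biUnion
    (Monotone.directed_le fun i j hij => Finset.coe_subset.2 (hvs.u_mono hδ hij)) hcover
  exact ⟨n, Finset.coe_subset.1 hn⟩

end IsVerySpecial

end UProblem

theorem pressedDown_exists_general (C : Type) (p : UProblem C)
    (v : Ordinal → Finset Ordinal) (hvs : p.IsVerySpecial v) :
    ∃ (m : Ordinal → ℕ) (w : Ordinal → Finset Ordinal),
      (p.drop m).PressedDown v w := by
  choose! m hm using fun δ (hδ : δ ∈ p.S) => hvs.exists_v_subset_u hδ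
  set q := p.drop m
  have hv (δ : Ordinal) (hδ : δ ∈ p.S) (n : ℕ) : v (q.η δ n) = p.u δ (n + m δ) :=
    (hvs.2.2.2.2 δ hδ _).symm
  choose w hw hwv using fun α => UProblem.exists_finset_eq_closure (q := q)
    (hvs.isLadderSystem.shift m) (fun δ hδ n => hvs.u_lt δ hδ _) (v α)
  have hw_mono {α β : Ordinal} (h : v α ⊆ v β) : w α ⊆ w β := by
    rw [← Finset.coe_subset, hw, hw]
    exact q.closure.monotone (Finset.coe_subset.2 h)
  refine ⟨m, w, fun α => ⟨fun β hβ => ?_, ?_⟩, fun δ hδ n => ⟨?_, hw_mono ?_⟩,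
    fun δ hδ n => hw_mono ?_⟩
  · obtain ⟨γ, hγ, hβγ⟩ := hwv α β hβ
    exact hβγ.trans_lt (hvs.v_lt α γ hγ)
  · rw [hw]
    exact q.closure.isClosed_closure _
  · rw [← Finset.coe_subset, hw]
    exact q.closure.le_closure _
  · rw [hv δ hδ, hv δ hδ]
    exact hvs.u_mono hδ (by omega)
  · rw [hv δ hδ]
    exact (hm δ hδ).trans (hvs.u_mono hδ (by omega))

/-- Lemma: for a very special problem `p` whose ladder system has
ℵ₀-uniformization there is `m̄` such that `p ∖ m̄` admits a pressed down system. -/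
theorem pressedDown_exists (C : Type) [Countable C] (p : UProblem C)
    (v : Ordinal → Finset Ordinal) (hvs : p.IsVerySpecial v)
    (hunif : HasUnif p.S p.η) :
    ∃ (m : Ordinal → ℕ) (w : Ordinal → Finset Ordinal),
      (p.drop m).PressedDown v w :=
  pressedDown_exists_general C p v hvs
end
end
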